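/- Let D be a (μ,ℵ₀)-regular filter on a set I, T a first-order theory with vocabulary τ, ε < ω, and Δ a set of conjunctions of atomic first-order τ-formulas of the form φ(x̄,ȳ) with x̄ a fixed tuple of ε variables. Then the following are equivalent: (B) D is a (μ,ℵ₀,ε,Δ,T)-moral filter; (C) for every family ⟨M_s : s ∈ I⟩ of models of T, the reduced product ∏_{s∈I} M_s/D is (μ⁺,ε,Δ)-saturated, i.e. every set of at most μ formulas φ(x̄,b̄) with φ ∈ Δ and parameters b̄ from the reduced product, which is finitely satisfiable in the reduced product, is realized in the reduced product. -/

import Mathlib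

open FirstOrder Cardinal

namespace Shelah1064

/-! ### Reduced products of first-order structures with respect to a filter -/

def rpSetoid {I : Type*} (D : Filter I) (M : I → Type*) : Setoid (∀ i, M i) where
  r f g := ∀ᶠ i in D, f i = g i
  iseqv := ⟨fun _ => Filter.Eventually.of_forall fun _ => rfl,
    fun h => h.mono fun _ e => e.symm,
    fun h₁ h₂ => h₂.mp (h₁.mono fun _ e₁ e₂ => e₁.trans e₂)⟩

/-- The reduced product `∏ᵢ Mᵢ / D`. -/
def RedProd {I : Type*} (D : Filter I) (M : I → Type*) : Type _ :=
  Quotient (rpSetoid D M)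

noncomputable instance RedProd.instStructure {I : Type*} {L : Language} (D : Filter I)
    (M : I → Type*) [∀ i, L.Structure (M i)] : L.Structure (RedProd D M) where
  funMap F x := Quotient.mk (rpSetoid D M) fun i =>
    Language.Structure.funMap F fun k => (Quotient.out (s := rpSetoid D M) (x k)) i
  RelMap r x := ∀ᶠ i in D,
    Language.Structure.RelMap r fun k => (Quotient.out (s := rpSetoid D M) (x k)) i

/-- The reduced power `M^I/D`. -/
abbrev RedPow {I : Type*} (D : Filter I) (M : Type*) : Type _ := RedProd D fun _ : I => M

/-- The lift of a binary relation to the reduced product: it holds of two classes iff it holds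
`D`-eventually of representatives. -/
def rpLiftRel {I : Type*} (D : Filter I) {M : I → Type*} (r : ∀ i, M i → M i → Prop)
    (x y : RedProd D M) : Prop :=
  ∀ᶠ i in D, r i (Quotient.out (s := rpSetoid D M) x i) (Quotient.out (s := rpSetoid D M) y i)

/-! ### Saturation for sets of formulas -/

/-- An instance of a formula `φ(x̄,ȳ)` (with `ȳ` of some finite length `m`) with
parameters from `N`. -/
abbrev FmlInst (L : Language) (ε : ℕ) (N : Type*) :=
  Σ m : ℕ, L.Formula (Fin ε ⊕ Fin m) × (Fin m → N)

/-- Realization of an instance `φ(x̄, b̄)` at the tuple `x̄`. -/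
def RealizesInst {L : Language} {N : Type*} [L.Structure N] {ε : ℕ} (x : Fin ε → N)
    (q : FmlInst L ε N) : Prop :=
  q.2.1.Realize (Sum.elim x q.2.2)

/-- `N` is `(κ, ε, Δ)`-saturated: every set of fewer than `κ` instances of formulas from `Δ`
(in a fixed `ε`-tuple of free variables `x̄`, with parameters from `N`) which is finitely
satisfiable in `N` is realized in `N`. -/
def TupSaturated {L : Language} (κ : Cardinal) (ε : ℕ)
    (Δ : Set (Σ m : ℕ, L.Formula (Fin ε ⊕ Fin m))) (N : Type*) [L.Structure N] : Prop :=
  ∀ p : Set (FmlInst L ε N),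
    (∀ q ∈ p, (⟨q.1, q.2.1⟩ : Σ m : ℕ, L.Formula (Fin ε ⊕ Fin m)) ∈ Δ) →
    #p < κ →
    (∀ s ⊆ p, s.Finite → ∃ x : Fin ε → N, ∀ q ∈ s, RealizesInst x q) →
    ∃ x : Fin ε → N, ∀ q ∈ p, RealizesInst x q

/-- `(κ, atomically)`-saturated: `(κ,1,Δ)`-saturated where `Δ` is the set of atomic formulas
`φ(x,ȳ)`. -/
def AtomSaturated {L : Language} (κ : Cardinal) (N : Type*) [L.Structure N] : Prop :=
  TupSaturated κ 1 {q : Σ m : ℕ, L.Formula (Fin 1 ⊕ Fin m) | q.2.IsAtomic} N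

/-- A (finite) conjunction of atomic formulas. -/
inductive IsConjAtomic {L : Language} {α : Type*} : ∀ {n : ℕ}, L.BoundedFormula α n → Prop
  | of_isAtomic {n} {φ : L.BoundedFormula α n} : φ.IsAtomic → IsConjAtomic φ
  | inf {n} {φ ψ : L.BoundedFormula α n} :
      IsConjAtomic φ → IsConjAtomic ψ → IsConjAtomic (φ ⊓ ψ)

/-- `D` is a `(μ,θ)`-regular filter on `I`: some family of `μ` members of `D` is such that
every point lies in fewer than `θ` of them. -/
def RegularFilter {I : Type*} (D : Filter I) (μ θ : Cardinal) : Prop :=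
  ∃ A : μ.ord.ToType → Set I, (∀ j, A j ∈ D) ∧ ∀ i : I, #{j | i ∈ A j} < θ

/-! ### Good, excellent and moral filters on complete Boolean algebras -/

/-- `x = y mod D`. -/
def EqModD {B : Type*} [Lattice B] (Dset : Set B) (x y : B) : Prop :=
  ∃ d ∈ Dset, x ⊓ d = y ⊓ d

/-- `D` is a `(μ,θ)`-excellent filter on the complete Boolean algebra `B`.  Sequences
`⟨a_u : u ∈ [μ]^{<θ}⟩` are represented as functions defined on all subsets of `μ.ord.ToType`
but constrained only on those of cardinality `< θ`. -/
def IsExcellent {B : Type*} [CompleteBooleanAlgebra B] (Dset : Set B) (μ θ : Cardinal) : Prop :=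
  ∀ a : Set μ.ord.ToType → B, ∃ b : Set μ.ord.ToType → B,
    (∀ u : Set μ.ord.ToType, #u < θ → b u ≤ a u ∧ EqModD Dset (b u) (a u)) ∧
    ∀ u v : Set μ.ord.ToType, #u < θ → #v < θ →
      (EqModD Dset (a u ⊓ a v) (a (u ∪ v)) → b u ⊓ b v = b (u ∪ v))

/-- A monotone sequence of members of `D` indexed by `[μ]^{<θ}` with `a_∅ = ⊤`. -/
def MonSeq {B : Type*} [CompleteBooleanAlgebra B] (Dset : Set B) (θ : Cardinal) {ι : Type*}
    (a : Set ι → B) : Prop :=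
  a ∅ = ⊤ ∧ (∀ u : Set ι, #u < θ → a u ∈ Dset) ∧
    ∀ u v : Set ι, #v < θ → u ⊆ v → a v ≤ a u

/-- `b` is a multiplicative refinement of `a` consisting of members of `D`:
the notion of solution for problems of all the kinds below. -/
def MultSolution {B : Type*} [CompleteBooleanAlgebra B] (Dset : Set B) (θ : Cardinal)
    {ι : Type*} (a b : Set ι → B) : Prop :=
  (∀ u : Set ι, #u < θ → b u ∈ Dset ∧ b u ≤ a u) ∧
  ∀ u : Set ι, #u < θ → b u = ⨅ α ∈ u, b {α}

/-- `D` is a `(μ,θ)`-good filter on the complete Boolean algebra `B`. -/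
def IsGood {B : Type*} [CompleteBooleanAlgebra B] (Dset : Set B) (μ θ : Cardinal) : Prop :=
  ∀ a : Set μ.ord.ToType → B, MonSeq Dset θ a → ∃ b, MultSolution Dset θ a b

/-- Auxiliary: the model `M` (with suitable parameter tuples) witnesses the problem
condition for the pair `(c, u)`, as in clause (a)(δ) of the definition of a moral problem. -/
def ProblemWitness {B : Type*} [CompleteBooleanAlgebra B] {L : Language} (Tth : L.Theory)
    (M : Type*) [L.Structure M] {ι : Type*} {ε : ℕ}
    (ψ : ι → Σ m : ℕ, L.Formula (Fin ε ⊕ Fin m)) (a : Set ι → B) (c : B) (u : Set ι) : Prop :=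
  M ⊨ Tth ∧ ∃ bb : ∀ α : ι, Fin (ψ α).1 → M, ∀ v ⊆ u,
    (c ≤ a v → ∃ x : Fin ε → M, ∀ α ∈ v, (ψ α).2.Realize (Sum.elim x (bb α))) ∧
    (c ≤ (a v)ᶜ → ¬ ∃ x : Fin ε → M, ∀ α ∈ v, (ψ α).2.Realize (Sum.elim x (bb α)))

/-- `a` is a `D`-`(μ,θ,ε,Δ,T)`-(moral) problem. -/
def IsMoralProblem {B : Type*} [CompleteBooleanAlgebra B] (Dset : Set B) {L : Language}
    (Tth : L.Theory) (μ θ : Cardinal) (ε : ℕ)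
    (Δ : Set (Σ m : ℕ, L.Formula (Fin ε ⊕ Fin m))) (a : Set μ.ord.ToType → B) : Prop :=
  MonSeq Dset θ a ∧
  ∃ ψ : μ.ord.ToType → Σ m : ℕ, L.Formula (Fin ε ⊕ Fin m),
    (∀ α, ψ α ∈ Δ) ∧
    ∀ c : B, c ≠ ⊥ → ∀ u : Set μ.ord.ToType, #u < θ →
      ∃ (M : Type) (iM : L.Structure M), @ProblemWitness B _ L Tth M iM _ ε ψ a c u

/-- `D` is a `(μ,θ,ε,Δ,T)`-moral filter on `B`: every problem has a solution. -/
def IsMoral {B : Type*} [CompleteBooleanAlgebra B] (Dset : Set B) {L : Language}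
    (Tth : L.Theory) (μ θ : Cardinal) (ε : ℕ)
    (Δ : Set (Σ m : ℕ, L.Formula (Fin ε ⊕ Fin m))) : Prop :=
  ∀ a : Set μ.ord.ToType → B, IsMoralProblem Dset Tth μ θ ε Δ a →
    ∃ b, MultSolution Dset θ a b

/-!
By Łoś's theorem for conjunctions of atomic formulas, a set `{φ_α(x̄, b̄_α) : α < μ}` over
`∏ Mᵢ/D` is realized exactly when the sets `a_u = {i : {φ_α(x̄, b̄_α(i)) : α ∈ u} is realized
in Mᵢ}` admit, `D` being `(μ,ℵ₀)`-regular, a multiplicative refinement in `D`. These `a_u` form a moral problem, witnessed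
at each coordinate `i` by `Mᵢ` itself; conversely a regularizing family `⟨A_α⟩` makes every
`uᵢ = {α : i ∈ A_α}` finite, so the witnesses of a problem for `{i}` and `uᵢ` assemble into
models `Mᵢ` and a type over `∏ Mᵢ/D` whose realizations yield solutions
`b_{α} = A_α ∩ {i : Mᵢ ⊨ φ_α(x̄(i), b̄_α(i))}`.
-/

namespace RedProd

variable {I : Type*} {D : Filter I} {M : I → Type*}

def mk (D : Filter I) (f : ∀ i, M i) : RedProd D M := Quotient.mk (rpSetoid D M) f

noncomputable def out (x : RedProd D M) : ∀ i, M i := Quotient.out (s := rpSetoid D M) x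

@[simp]
theorem mk_out (x : RedProd D M) : mk D x.out = x := Quotient.out_eq (s := rpSetoid D M) x

theorem exists_mk_eq {ε : Type*} (X : ε → RedProd D M) :
    ∃ x : ε → ∀ i, M i, (fun k => mk D (x k)) = X :=
  ⟨fun k => (X k).out, funext fun k => mk_out (X k)⟩

theorem out_mk (f : ∀ i, M i) : ∀ᶠ i in D, (mk D f).out i = f i :=
  Quotient.mk_out (s := rpSetoid D M) f

theorem mk_eq_mk {f g : ∀ i, M i} : mk D f = mk D g ↔ ∀ᶠ i in D, f i = g i :=
  Quotient.eq (r := rpSetoid D M)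

theorem sumElim_mk {α β : Type*} (g : α → ∀ i, M i) (h : β → ∀ i, M i) :
    Sum.elim (fun a => mk D (g a)) (fun b => mk D (h b)) =
      fun w => mk D fun i => Sum.elim (fun a => g a i) (fun b => h b i) w := by
  funext w
  cases w <;> rfl

variable {L : Language} [∀ i, L.Structure (M i)]

theorem eventually_out_mk {n : ℕ} (x : Fin n → ∀ i, M i) :
    ∀ᶠ i in D, (fun k => (mk D (x k)).out i) = fun k => x k i := by
  filter_upwards [Filter.eventually_all.2 fun k => out_mk (D := D) (x k)] with i hi
  exact funext hi

theorem funMap_mk {n : ℕ} (F : L.Functions n) (x : Fin n → ∀ i, M i) :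
    Language.Structure.funMap F (fun k => mk D (x k)) =
      mk D fun i => Language.Structure.funMap F fun k => x k i := by
  refine mk_eq_mk.2 ?_
  filter_upwards [eventually_out_mk (D := D) x] with i hi
  exact congrArg _ hi

theorem relMap_mk {n : ℕ} (R : L.Relations n) (x : Fin n → ∀ i, M i) :
    Language.Structure.RelMap R (fun k => mk D (x k)) ↔
      ∀ᶠ i in D, Language.Structure.RelMap R fun k => x k i := by
  refine Filter.eventually_congr ?_
  filter_upwards [eventually_out_mk (D := D) x] with i hi
  exact iff_of_eq (congrArg (Language.Structure.RelMap R) hi)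

theorem term_realize_mk {α : Type*} (t : L.Term α) (g : α → ∀ i, M i) :
    t.realize (fun a => mk D (g a)) = mk D fun i => t.realize fun a => g a i := by
  induction t with
  | var a => rfl
  | func F ts ih =>
    simp only [Language.Term.realize, ih]
    exact funMap_mk F _

theorem boundedFormula_realize_mk {α : Type*} {n : ℕ} {φ : L.BoundedFormula α n}
    (hφ : IsConjAtomic φ) (g : α → ∀ i, M i) (xs : Fin n → ∀ i, M i) :
    φ.Realize (fun a => mk D (g a)) (fun k => mk D (xs k)) ↔
      ∀ᶠ i in D, φ.Realize (fun a => g a i) fun k => xs k i := by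
  induction hφ with
  | of_isAtomic h =>
    cases h with
    | equal t₁ t₂ =>
      simp only [Language.BoundedFormula.realize_bdEqual, sumElim_mk, term_realize_mk, mk_eq_mk]
    | rel R ts =>
      simp only [Language.BoundedFormula.realize_rel, sumElim_mk, term_realize_mk, relMap_mk]
  | inf _ _ ih₁ ih₂ =>
    simp only [Language.BoundedFormula.realize_inf, ih₁, ih₂, Filter.eventually_and]

theorem formula_realize_mk {α : Type*} {φ : L.Formula α} (hφ : IsConjAtomic φ)
    (g : α → ∀ i, M i) :
    φ.Realize (fun a => mk D (g a)) ↔ ∀ᶠ i in D, φ.Realize fun a => g a i := by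
  let xs : Fin 0 → ∀ i, M i := default
  unfold Language.Formula.Realize
  rw [← Subsingleton.elim (fun k => mk D (xs k)) default, boundedFormula_realize_mk hφ]
  refine Filter.eventually_congr (.of_forall fun i => ?_)
  rw [Subsingleton.elim (fun k => xs k i) default]

end RedProd

section Problems

variable {B : Type*} [CompleteBooleanAlgebra B] {L : Language} {T : L.Theory} {N : Type*}
  [L.Structure N] {ι : Type*} {ε : ℕ} {ψ : ι → Σ m : ℕ, L.Formula (Fin ε ⊕ Fin m)}

theorem ProblemWitness.mono {a : Set ι → B} {c c' : B} {u : Set ι} (h : c' ≤ c)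
    (hw : ProblemWitness T N ψ a c' u) : ProblemWitness T N ψ a c u :=
  ⟨hw.1, hw.2.imp fun _ hbb v hv =>
    ⟨fun hc => (hbb v hv).1 (h.trans hc), fun hc => (hbb v hv).2 (h.trans hc)⟩⟩

theorem problemWitness_singleton_iff {I : Type*} {a : Set ι → Set I} {i : I} {u : Set ι} :
    ProblemWitness T N ψ a {i} u ↔ N ⊨ T ∧ ∃ bb : ∀ α, Fin (ψ α).1 → N, ∀ v ⊆ u,
      (i ∈ a v ↔ ∃ x : Fin ε → N, ∀ α ∈ v, (ψ α).2.Realize (Sum.elim x (bb α))) := by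
  simp only [ProblemWitness, Set.singleton_subset_iff, Set.mem_compl_iff,
    not_imp_not, ← iff_iff_implies_and_implies]

theorem finitelySatisfiable_range {f : ι → FmlInst L ε N}
    (h : ∀ v : Set ι, v.Finite → ∃ X : Fin ε → N, ∀ α ∈ v, RealizesInst X (f α)) :
    ∀ s ⊆ Set.range f, s.Finite → ∃ X : Fin ε → N, ∀ q ∈ s, RealizesInst X q := by
  intro s hs hs_fin
  have : Finite s := hs_fin.to_subtype
  choose g hg using fun q : s => hs q.2
  obtain ⟨X, hX⟩ := h _ (Set.finite_range g)
  refine ⟨X, fun q hq => ?_⟩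
  rw [← show f (g ⟨q, hq⟩) = q from hg ⟨q, hq⟩]
  exact hX _ (Set.mem_range_self _)

end Problems

section Realizability

variable {I : Type*} {D : Filter I} {L : Language} {M : I → Type*} [∀ i, L.Structure (M i)]
  {ε : ℕ} {ι : Type*} {ψ : ι → Σ m : ℕ, L.Formula (Fin ε ⊕ Fin m)}
  {bb : ∀ α, Fin (ψ α).1 → ∀ i, M i}

variable (D ψ bb) in
def fmlInst (α : ι) : FmlInst L ε (RedProd D M) :=
  ⟨(ψ α).1, (ψ α).2, fun k => RedProd.mk D (bb α k)⟩

variable (ψ bb) in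
def realizableSet (u : Set ι) : Set I :=
  {i | ∃ x : Fin ε → M i, ∀ α ∈ u, (ψ α).2.Realize (Sum.elim x fun k => bb α k i)}

theorem realizesInst_fmlInst_iff {α : ι} (hα : IsConjAtomic (ψ α).2) (x : Fin ε → ∀ i, M i) :
    RealizesInst (fun k => RedProd.mk D (x k)) (fmlInst D ψ bb α) ↔
      ∀ᶠ i in D, (ψ α).2.Realize (Sum.elim (fun k => x k i) fun k => bb α k i) := by
  simp only [RealizesInst, fmlInst, RedProd.sumElim_mk]
  exact RedProd.formula_realize_mk hα _

theorem exists_realizesInst_iff_realizableSet_mem (hψ : ∀ α, IsConjAtomic (ψ α).2)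
    (hne : ∀ i, Nonempty (Fin ε → M i)) {u : Set ι} (hu : u.Finite) :
    (∃ X : Fin ε → RedProd D M, ∀ α ∈ u, RealizesInst X (fmlInst D ψ bb α)) ↔
      realizableSet ψ bb u ∈ D := by
  constructor
  · rintro ⟨X, hX⟩
    obtain ⟨x, rfl⟩ := RedProd.exists_mk_eq X
    have hx := fun α hα => (realizesInst_fmlInst_iff (hψ α) x).1 (hX α hα)
    filter_upwards [(Filter.eventually_all_finite hu).2 hx] with i hi using ⟨_, hi⟩
  · intro hu_mem
    have hx : ∀ i, ∃ x : Fin ε → M i, i ∈ realizableSet ψ bb u →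
        ∀ α ∈ u, (ψ α).2.Realize (Sum.elim x fun k => bb α k i) := fun i => by
      by_cases hi : i ∈ realizableSet ψ bb u
      · exact hi.imp fun _ hx _ => hx
      · exact (hne i).elim fun x => ⟨x, fun h => absurd h hi⟩
    choose x hx using hx
    refine ⟨fun k => RedProd.mk D fun i => x i k, fun α hα => ?_⟩
    refine (realizesInst_fmlInst_iff (hψ α) _).2 ?_
    filter_upwards [hu_mem] with i hi using hx i hi α hα

theorem exists_realizesInst_of_multSolution {μ : Cardinal} (hreg : RegularFilter D μ ℵ₀)
    {ψ : μ.ord.ToType → Σ m : ℕ, L.Formula (Fin ε ⊕ Fin m)} {bb : ∀ α, Fin (ψ α).1 → ∀ i, M i}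
    (hψ : ∀ α, IsConjAtomic (ψ α).2) {b : Set μ.ord.ToType → Set I}
    (hb : MultSolution {A | A ∈ D} ℵ₀ (realizableSet ψ bb) b) :
    ∃ X : Fin ε → RedProd D M, ∀ α, RealizesInst X (fmlInst D ψ bb α) := by
  obtain ⟨A, hAD, hAfin⟩ := hreg
  let w : I → Set μ.ord.ToType := fun i => {α | i ∈ b {α} ∩ A α}
  have hw : ∀ i, #(w i) < ℵ₀ := fun i =>
    (mk_le_mk_of_subset fun _ hα => hα.2).trans_lt (hAfin i)
  have hsol : ∀ i, i ∈ realizableSet ψ bb (w i) := fun i => by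
    refine (hb.1 _ (hw i)).2 ?_
    rw [hb.2 _ (hw i)]
    simp only [Set.iInf_eq_iInter, Set.mem_iInter]
    exact fun α hα => hα.1
  choose x hx using hsol
  refine ⟨fun k => RedProd.mk D fun i => x i k, fun α => ?_⟩
  refine (realizesInst_fmlInst_iff (hψ α) _).2 ?_
  have hbα : b {α} ∈ D := (hb.1 {α} (by simp)).1
  filter_upwards [hbα, hAD α] with i h₁ h₂ using hx i α ⟨h₁, h₂⟩

theorem exists_multSolution_of_realizesInst {a : Set ι → Set I} {A : ι → Set I}
    (hA : ∀ α, A α ∈ D) (hψ : ∀ α, IsConjAtomic (ψ α).2) {X : Fin ε → RedProd D M}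
    (hX : ∀ α, RealizesInst X (fmlInst D ψ bb α))
    (ha : ∀ i v, (∀ α ∈ v, i ∈ A α) → i ∈ realizableSet ψ bb v → i ∈ a v) :
    ∃ b, MultSolution {A | A ∈ D} ℵ₀ a b := by
  obtain ⟨x, rfl⟩ := RedProd.exists_mk_eq X
  let S : ι → Set I := fun α =>
    {i | (ψ α).2.Realize (Sum.elim (fun k => x k i) fun k => bb α k i)} ∩ A α
  refine ⟨fun v => ⋂ α ∈ v, S α, fun v hv => ⟨?_, fun i hi => ?_⟩, fun v _ => ?_⟩
  · refine (Filter.biInter_mem (lt_aleph0_iff_set_finite.1 hv)).2 fun α _ => ?_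
    exact Filter.inter_mem ((realizesInst_fmlInst_iff (hψ α) x).1 (hX α)) (hA α)
  · simp only [Set.mem_iInter] at hi
    exact ha i v (fun α hα => (hi α hα).2) ⟨_, fun α hα => (hi α hα).1⟩
  · simp only [Set.iInf_eq_iInter, Set.biInter_singleton]

end Realizability

section Equivalence

variable {I : Type} {D : Filter I} {L : Language} {T : L.Theory} {μ : Cardinal}
  {ε : ℕ} {Δ : Set (Σ m : ℕ, L.Formula (Fin ε ⊕ Fin m))}

theorem isMoralProblem_realizableSet {M : I → Type} [∀ i, L.Structure (M i)]
    (hM : ∀ i, M i ⊨ T) {ψ : μ.ord.ToType → Σ m : ℕ, L.Formula (Fin ε ⊕ Fin m)}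
    (hψ : ∀ α, ψ α ∈ Δ) (bb : ∀ α, Fin (ψ α).1 → ∀ i, M i) (hne : ∀ i, Nonempty (Fin ε → M i))
    (hD : ∀ u : Set μ.ord.ToType, u.Finite → realizableSet ψ bb u ∈ D) :
    IsMoralProblem {A | A ∈ D} T μ ℵ₀ ε Δ (realizableSet ψ bb) := by
  refine ⟨⟨?_, fun u hu => hD u (lt_aleph0_iff_set_finite.1 hu), ?_⟩, ψ, hψ, fun c hc u _ => ?_⟩
  · exact Set.eq_univ_of_forall fun i => (hne i).elim fun x => ⟨x, by simp⟩
  · exact fun u v _ huv i ⟨x, hx⟩ => ⟨x, fun α hα => hx α (huv hα)⟩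
  · obtain ⟨i, hi⟩ := Set.nonempty_iff_ne_empty.2 hc
    refine ⟨M i, inferInstance, ProblemWitness.mono (Set.singleton_subset_iff.2 hi) ?_⟩
    exact problemWitness_singleton_iff.2 ⟨hM i, fun α k => bb α k i, fun _ _ => Iff.rfl⟩

theorem tupSaturated_of_isMoral (hreg : RegularFilter D μ ℵ₀)
    (hΔ : ∀ q ∈ Δ, IsConjAtomic q.2) (hmoral : IsMoral {A | A ∈ D} T μ ℵ₀ ε Δ)
    (M : I → Type) [∀ i, L.Structure (M i)] (hM : ∀ i, M i ⊨ T) :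
    TupSaturated (Order.succ μ) ε Δ (RedProd D M) := by
  intro p hpΔ hp hfin
  obtain ⟨X₀, -⟩ := hfin ∅ (Set.empty_subset p) Set.finite_empty
  have hne : ∀ i, Nonempty (Fin ε → M i) := fun i => ⟨fun k => (X₀ k).out i⟩
  rcases p.eq_empty_or_nonempty with rfl | ⟨q₀, hq₀⟩
  · exact ⟨X₀, by simp⟩
  have hp_le : #p ≤ #μ.ord.ToType := by rwa [mk_ord_toType, ← Order.lt_succ_iff]
  obtain ⟨q, hq⟩ : ∃ q : μ.ord.ToType → p, Function.Surjective q :=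
    Function.exists_surjective_iff.2 ⟨⟨fun _ => ⟨q₀, hq₀⟩⟩, (le_def _ _).1 hp_le⟩
  let ψ : μ.ord.ToType → Σ m : ℕ, L.Formula (Fin ε ⊕ Fin m) := fun α => ⟨(q α).1.1, (q α).1.2.1⟩
  let bb : ∀ α, Fin (ψ α).1 → ∀ i, M i := fun α k => ((q α).1.2.2 k).out
  have hq_eq : ∀ α, fmlInst D ψ bb α = q α := fun α => by simp [fmlInst, ψ, bb]
  have hψ : ∀ α, IsConjAtomic (ψ α).2 := fun α => hΔ _ (hpΔ _ (q α).2)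
  have hD : ∀ u : Set μ.ord.ToType, u.Finite → realizableSet ψ bb u ∈ D := fun u hu => by
    refine (exists_realizesInst_iff_realizableSet_mem hψ hne hu).1 ?_
    obtain ⟨X, hX⟩ := hfin ((fun α => (q α).1) '' u)
      (Set.image_subset_iff.2 fun α _ => (q α).2) (hu.image _)
    exact ⟨X, fun α hα => hq_eq α ▸ hX _ ⟨α, hα, rfl⟩⟩
  obtain ⟨b, hb⟩ := hmoral _ (isMoralProblem_realizableSet hM (fun α => hpΔ _ (q α).2) bb hne hD)
  obtain ⟨X, hX⟩ := exists_realizesInst_of_multSolution hreg hψ hb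
  refine ⟨X, fun q' hq' => ?_⟩
  obtain ⟨α, hα⟩ := hq ⟨q', hq'⟩
  simpa [hq_eq, hα] using hX α

theorem isMoral_of_forall_tupSaturated (hreg : RegularFilter D μ ℵ₀)
    (hΔ : ∀ q ∈ Δ, IsConjAtomic q.2)
    (hsat : ∀ (M : I → Type) [∀ i, L.Structure (M i)],
      (∀ i, M i ⊨ T) → TupSaturated (Order.succ μ) ε Δ (RedProd D M)) :
    IsMoral {A | A ∈ D} T μ ℵ₀ ε Δ := by
  rintro a ⟨⟨ha_empty, ha_mem, -⟩, ψ, hψ, hwit⟩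
  obtain ⟨A, hA, hAfin⟩ := hreg
  choose N _ hN using fun i => hwit {i} (Set.singleton_ne_empty i) {α | i ∈ A α} (hAfin i)
  choose hNT bb hbb using fun i => problemWitness_singleton_iff.1 (hN i)
  let bb' : ∀ α, Fin (ψ α).1 → ∀ i, N i := fun α k i => bb i α k
  have hkey : ∀ i v, (∀ α ∈ v, i ∈ A α) → (i ∈ a v ↔ i ∈ realizableSet ψ bb' v) :=
    fun i v hv => hbb i v hv
  have hne : ∀ i, Nonempty (Fin ε → N i) := fun i =>
    ((hkey i ∅ (by simp)).1 (by simp [ha_empty])).elim fun x _ => ⟨x⟩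
  have hψ' : ∀ α, IsConjAtomic (ψ α).2 := fun α => hΔ _ (hψ α)
  have hfin : ∀ v : Set μ.ord.ToType, v.Finite →
      ∃ X : Fin ε → RedProd D N, ∀ α ∈ v, RealizesInst X (fmlInst D ψ bb' α) := fun v hv => by
    have hJ : a v ∩ ⋂ α ∈ v, A α ∈ D :=
      Filter.inter_mem (ha_mem v (lt_aleph0_iff_set_finite.2 hv))
        ((Filter.biInter_mem hv).2 fun α _ => hA α)
    refine (exists_realizesInst_iff_realizableSet_mem hψ' hne hv).2 ?_
    exact Filter.mem_of_superset hJ fun i hi => (hkey i v (Set.mem_iInter₂.1 hi.2)).1 hi.1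
  have hcard : #(Set.range (fmlInst D ψ bb')) < Order.succ μ :=
    (mk_range_le.trans_eq (mk_ord_toType μ)).trans_lt (Order.lt_succ μ)
  obtain ⟨X, hX⟩ := hsat N hNT _ (Set.forall_mem_range.2 hψ) hcard
    (finitelySatisfiable_range hfin)
  exact exists_multSolution_of_realizesInst hA hψ' (fun α => hX _ ⟨α, rfl⟩)
    fun i v hv => (hkey i v hv).2

end Equivalence

/-- For a `(μ,ℵ₀)`-regular filter `D` on a set `I`, a theory `T`, `ε < ω` and a
set `Δ` of conjunctions of atomic formulas `φ(x̄,ȳ)` with `x̄` a fixed `ε`-tuple, the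
following are equivalent: (B) `D` is `(μ,ℵ₀,ε,Δ,T)`-moral; (C) every reduced product
`∏ₛ Mₛ/D` of models of `T` is `(μ⁺,ε,Δ)`-saturated. -/
theorem isMoral_iff_redProd_saturated {I : Type} (D : Filter I) {L : FirstOrder.Language.{0, 0}}
    (Tth : L.Theory) (μ : Cardinal) (hreg : RegularFilter D μ ℵ₀) (ε : ℕ)
    (Δ : Set (Σ m : ℕ, L.Formula (Fin ε ⊕ Fin m)))
    (hΔ : ∀ q ∈ Δ, IsConjAtomic q.2) :
    IsMoral {A : Set I | A ∈ D} Tth μ ℵ₀ ε Δ ↔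
      ∀ (M : I → Type) [∀ i, L.Structure (M i)],
        (∀ i, M i ⊨ Tth) → TupSaturated (Order.succ μ) ε Δ (RedProd D M) :=
  ⟨fun hmoral M _ hM => tupSaturated_of_isMoral hreg hΔ hmoral M hM,
    isMoral_of_forall_tupSaturated hreg hΔ⟩

end Shelah1064
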